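/- Fix a common factor dimension a and two constrained polynomial zonotope parameterizations in ℝ^n: p₁(α) with data (c₁, G₁ ∈ ℝ^{n×h₁}, Ē₁ ∈ ℕ^{a×h₁}, A₁ ∈ ℝ^{m₁×q₁}, b₁, R̄₁ ∈ ℕ^{a×q₁}) and p₂(α) with data (c₂, G₂ ∈ ℝ^{n×h₂}, Ē₂ ∈ ℕ^{a×h₂}, A₂ ∈ ℝ^{m₂×q₂}, b₂, R̄₂ ∈ ℕ^{a×q₂}). Let ⊙ denote the componentwise (Hadamard) product of vectors in ℝ^n. Then the dependency-preserving Hadamard-product set { p₁(α) ⊙ p₂(α) : α ∈ [-1,1]^a satisfying both constraint equations } equals the constrained polynomial zonotope with center c₁ ⊙ c₂; with h₁ + h₂ + h₁·h₂ generator columns given in order by G₁(·,i) ⊙ c₂ (i = 1,…,h₁), c₁ ⊙ G₂(·,j) (j = 1,…,h₂), and G₁(·,i) ⊙ G₂(·,j) (ordered by i and within i by j); with generator exponent columns, in the same order, Ē₁(·,i), Ē₂(·,j), and Ē₁(·,i) + Ē₂(·,j); with block-diagonal constraint matrix [[A₁, 0],[0, A₂]], constraint right-hand side [b₁; b₂],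 and constraint exponent matrix [R̄₁ R̄₂]. Hence the Hadamard multiplication of two CPZs admits an algebraically exact CPZ representation. -/
import Mathlib


open scoped BigOperators

/-- A constrained polynomial zonotope. -/
def CPZ {N P H M Q : Type*} [Fintype P] [Fintype H] [Fintype Q]
    (c : N → ℝ) (G : N → H → ℝ) (E : P → H → ℕ)
    (A : M → Q → ℝ) (b : M → ℝ) (R : P → Q → ℕ) : Set (N → ℝ) :=
  { x | ∃ α : P → ℝ, (∀ k, α k ∈ Set.Icc (-1 : ℝ) 1) ∧
      (∀ r, ∑ j, (∏ k, α k ^ R k j) * A r j = b r) ∧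
      x = fun ℓ => c ℓ + ∑ i, (∏ k, α k ^ E k i) * G ℓ i }

/-- Exact Hadamard (componentwise) multiplication of two CPZ parameterizations
over a common factor dimension: the dependency-preserving Hadamard-product set
admits an algebraically exact CPZ representation. -/
theorem stmt9 {n a h₁ h₂ m₁ m₂ q₁ q₂ : ℕ}
    (c₁ : Fin n → ℝ) (G₁ : Fin n → Fin h₁ → ℝ) (E₁ : Fin a → Fin h₁ → ℕ)
    (A₁ : Fin m₁ → Fin q₁ → ℝ) (b₁ : Fin m₁ → ℝ) (R₁ : Fin a → Fin q₁ → ℕ)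
    (c₂ : Fin n → ℝ) (G₂ : Fin n → Fin h₂ → ℝ) (E₂ : Fin a → Fin h₂ → ℕ)
    (A₂ : Fin m₂ → Fin q₂ → ℝ) (b₂ : Fin m₂ → ℝ) (R₂ : Fin a → Fin q₂ → ℕ) :
    { x : Fin n → ℝ | ∃ α : Fin a → ℝ,
        (∀ k, α k ∈ Set.Icc (-1 : ℝ) 1) ∧
        (∀ r, ∑ i, (∏ k, α k ^ R₁ k i) * A₁ r i = b₁ r) ∧
        (∀ r, ∑ i, (∏ k, α k ^ R₂ k i) * A₂ r i = b₂ r) ∧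
        x = fun ℓ => (c₁ ℓ + ∑ i, (∏ k, α k ^ E₁ k i) * G₁ ℓ i)
                   * (c₂ ℓ + ∑ i, (∏ k, α k ^ E₂ k i) * G₂ ℓ i) }
    = CPZ (P := Fin a) (H := Fin h₁ ⊕ (Fin h₂ ⊕ Fin h₁ × Fin h₂))
        (M := Fin m₁ ⊕ Fin m₂) (Q := Fin q₁ ⊕ Fin q₂)
        -- center c₁ ⊙ c₂
        (fun ℓ => c₁ ℓ * c₂ ℓ)
        -- generator columns: G₁(·,i) ⊙ c₂, c₁ ⊙ G₂(·,j), G₁(·,i) ⊙ G₂(·,j)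
        (fun ℓ idx => match idx with
          | Sum.inl i => G₁ ℓ i * c₂ ℓ
          | Sum.inr (Sum.inl j) => c₁ ℓ * G₂ ℓ j
          | Sum.inr (Sum.inr ij) => G₁ ℓ ij.1 * G₂ ℓ ij.2)
        -- generator exponent columns: Ē₁(·,i), Ē₂(·,j), Ē₁(·,i) + Ē₂(·,j)
        (fun k idx => match idx with
          | Sum.inl i => E₁ k i
          | Sum.inr (Sum.inl j) => E₂ k j
          | Sum.inr (Sum.inr ij) => E₁ k ij.1 + E₂ k ij.2)
        -- block-diagonal constraint matrix
        (fun r j => match r, j with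
          | Sum.inl r, Sum.inl j => A₁ r j
          | Sum.inr r, Sum.inr j => A₂ r j
          | _, _ => 0)
        (Sum.elim b₁ b₂)
        (fun k => Sum.elim (R₁ k) (R₂ k)) := by
  ext x
  simp only [CPZ, Set.mem_setOf_eq]
  have key : ∀ (α : Fin a → ℝ) (ℓ : Fin n),
      (c₁ ℓ * c₂ ℓ) + ∑ idx : Fin h₁ ⊕ (Fin h₂ ⊕ Fin h₁ × Fin h₂),
        (∏ k, α k ^ (match idx with
          | Sum.inl i => E₁ k i
          | Sum.inr (Sum.inl j) => E₂ k j
          | Sum.inr (Sum.inr ij) => E₁ k ij.1 + E₂ k ij.2)) *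
        (match idx with
          | Sum.inl i => G₁ ℓ i * c₂ ℓ
          | Sum.inr (Sum.inl j) => c₁ ℓ * G₂ ℓ j
          | Sum.inr (Sum.inr ij) => G₁ ℓ ij.1 * G₂ ℓ ij.2)
      = (c₁ ℓ + ∑ i, (∏ k, α k ^ E₁ k i) * G₁ ℓ i)
        * (c₂ ℓ + ∑ i, (∏ k, α k ^ E₂ k i) * G₂ ℓ i) := by
    intro α ℓ
    rw [Fintype.sum_sum_type, Fintype.sum_sum_type, Fintype.sum_prod_type]
    have hp : ∀ (i : Fin h₁) (j : Fin h₂),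
        (∏ k, α k ^ (E₁ k i + E₂ k j))
          = (∏ k, α k ^ E₁ k i) * (∏ k, α k ^ E₂ k j) := by
      intro i j
      rw [← Finset.prod_mul_distrib]
      exact Finset.prod_congr rfl fun k _ => pow_add _ _ _
    simp only [hp]
    have : ∀ i : Fin h₁, ∑ j : Fin h₂,
        ((∏ k, α k ^ E₁ k i) * (∏ k, α k ^ E₂ k j)) * (G₁ ℓ i * G₂ ℓ j)
        = ((∏ k, α k ^ E₁ k i) * G₁ ℓ i) * ∑ j, (∏ k, α k ^ E₂ k j) * G₂ ℓ j := by
      intro i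
      rw [Finset.mul_sum]
      exact Finset.sum_congr rfl fun j _ => by ring
    rw [Finset.sum_congr rfl fun i _ => this i, ← Finset.sum_mul]
    have e1 : ∑ i : Fin h₁, (∏ k, α k ^ E₁ k i) * (G₁ ℓ i * c₂ ℓ)
        = (∑ i : Fin h₁, (∏ k, α k ^ E₁ k i) * G₁ ℓ i) * c₂ ℓ := by
      rw [Finset.sum_mul]; exact Finset.sum_congr rfl fun i _ => by ring
    have e2 : ∑ j : Fin h₂, (∏ k, α k ^ E₂ k j) * (c₁ ℓ * G₂ ℓ j)
        = c₁ ℓ * ∑ j : Fin h₂, (∏ k, α k ^ E₂ k j) * G₂ ℓ j := by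
      rw [Finset.mul_sum]; exact Finset.sum_congr rfl fun j _ => by ring
    rw [e1, e2]; ring
  have keyc₁ : ∀ (α : Fin a → ℝ) (r : Fin m₁),
      (∑ j : Fin q₁ ⊕ Fin q₂, (∏ k, α k ^ Sum.elim (R₁ k) (R₂ k) j) *
        (match Sum.inl r, j with
          | Sum.inl r, Sum.inl j => A₁ r j
          | Sum.inr r, Sum.inr j => A₂ r j
          | _, _ => (0:ℝ)))
      = ∑ i, (∏ k, α k ^ R₁ k i) * A₁ r i := by
    intro α r
    rw [Fintype.sum_sum_type]
    simp
  have keyc₂ : ∀ (α : Fin a → ℝ) (r : Fin m₂),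
      (∑ j : Fin q₁ ⊕ Fin q₂, (∏ k, α k ^ Sum.elim (R₁ k) (R₂ k) j) *
        (match Sum.inr r, j with
          | Sum.inl r, Sum.inl j => A₁ r j
          | Sum.inr r, Sum.inr j => A₂ r j
          | _, _ => (0:ℝ)))
      = ∑ i, (∏ k, α k ^ R₂ k i) * A₂ r i := by
    intro α r
    rw [Fintype.sum_sum_type]
    simp
  constructor
  · rintro ⟨α, hα, hc1, hc2, rfl⟩
    refine ⟨α, hα, ?_, ?_⟩
    · rintro (r | r)
      · rw [keyc₁]; exact hc1 r
      · rw [keyc₂]; exact hc2 r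
    · funext ℓ; exact (key α ℓ).symm
  · rintro ⟨α, hα, hc, rfl⟩
    refine ⟨α, hα, ?_, ?_, ?_⟩
    · intro r; rw [← keyc₁ α r]; exact hc (Sum.inl r)
    · intro r; rw [← keyc₂ α r]; exact hc (Sum.inr r)
    · funext ℓ; exact key α ℓ
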